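/- arXiv:1908.02419 — 2 statements merged into one kernel-verified Lean document; each statement's English description precedes it below -/
import Mathlib

section
/- Let σ : ℝ → ℝ be monotonically increasing with limits σ₋ = lim_{x→−∞} σ(x) > −∞ and σ₊ = lim_{x→+∞} σ(x), where σ₊ is finite and σ₊ > σ₋. Let x₁,…,x_n ∈ ℝ^m satisfy ‖x_i‖₂² − ⟨x_i, x_j⟩ > γ > 0 for all i ≠ j. Then for all sufficiently large β > 0, the matrix A ∈ ℝ^{n×n} with A_{ij} = σ(β⟨x_j, x_i⟩ + γβ/2 − β‖x_j‖₂²) is such that the matrix [A_{ij} − σ₋]_{ij} is strictly diagonally dominant, and hence [A_{ij} − σ₋]_{ij} is nonsingular. -/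
open Filter

/-- For a monotone activation with finite limits `σ₋ < σ₊` at `∓∞`, and separated data
points, the shifted matrix `[σ(β⟨x_j,x_i⟩ + γβ/2 − β‖x_j‖²) − σ₋]` is strictly diagonally
dominant, hence nonsingular, for all sufficiently large `β`. -/
theorem stmt6 {n m : ℕ} (σ : ℝ → ℝ) (hmono : Monotone σ) (σm σp : ℝ)
    (hbot : Tendsto σ atBot (nhds σm)) (htop : Tendsto σ atTop (nhds σp)) (hlt : σm < σp)
    (x : Fin n → Fin m → ℝ) (γ : ℝ) (hγ : 0 < γ)
    (hsep : ∀ i j, i ≠ j → γ < (∑ k, x i k * x i k) - ∑ k, x i k * x j k) :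
    ∃ β₀ : ℝ, ∀ β ≥ β₀,
      (∀ i, ∑ j ∈ Finset.univ.erase i,
          |σ (β * (∑ k, x j k * x i k) + γ * β / 2 - β * ∑ k, x j k * x j k) - σm|
        < |σ (β * (∑ k, x i k * x i k) + γ * β / 2 - β * ∑ k, x i k * x i k) - σm|) ∧
      (Matrix.of fun i j : Fin n =>
          σ (β * (∑ k, x j k * x i k) + γ * β / 2 - β * ∑ k, x j k * x j k) - σm).det ≠ 0 := by
  -- σm ≤ σ t ≤ σp for all t
  have hge : ∀ t, σm ≤ σ t := by
    intro t
    refine le_of_tendsto hbot ?_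
    filter_upwards [eventually_le_atBot t] with y hy using hmono hy
  set ε : ℝ := (σp - σm) / (2 * (n + 1)) with hε
  have hεpos : 0 < ε := by
    apply div_pos (by linarith) (by positivity)
  -- thresholds
  have hT : ∀ᶠ t in atTop, (σp + σm) / 2 < σ t :=
    htop.eventually (eventually_gt_nhds (by linarith))
  have hB : ∀ᶠ t in atBot, σ t < σm + ε :=
    hbot.eventually (eventually_lt_nhds (by linarith))
  obtain ⟨M, hM⟩ := eventually_atTop.1 hT
  obtain ⟨N, hN⟩ := eventually_atBot.1 hB
  refine ⟨max 1 (max (2 * M / γ) (-2 * N / γ)), fun β hβ => ?_⟩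
  have hβ1 : (1 : ℝ) ≤ β := le_trans (le_max_left _ _) hβ
  have hβM : 2 * M / γ ≤ β := le_trans (le_trans (le_max_left _ _) (le_max_right _ _)) hβ
  have hβN : -2 * N / γ ≤ β := le_trans (le_trans (le_max_right _ _) (le_max_right _ _)) hβ
  have hMγ : M ≤ γ * β / 2 := by
    rw [div_le_iff₀ hγ] at hβM; nlinarith
  have hNγ : -(γ * β / 2) ≤ N := by
    rw [div_le_iff₀ hγ] at hβN; nlinarith
  -- diagonal lower bound
  have hdiag : ∀ i : Fin n, (σp - σm) / 2 <
      σ (β * (∑ k, x i k * x i k) + γ * β / 2 - β * ∑ k, x i k * x i k) - σm := by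
    intro i
    have harg : β * (∑ k, x i k * x i k) + γ * β / 2 - β * ∑ k, x i k * x i k
        = γ * β / 2 := by ring
    rw [harg]
    have := hM _ hMγ
    linarith
  -- off-diagonal upper bound
  have hoff : ∀ i j : Fin n, j ≠ i →
      σ (β * (∑ k, x j k * x i k) + γ * β / 2 - β * ∑ k, x j k * x j k) - σm ≤ ε := by
    intro i j hji
    have hs := hsep j i hji
    have harg : β * (∑ k, x j k * x i k) + γ * β / 2 - β * ∑ k, x j k * x j k ≤ N := by
      have : β * (∑ k, x j k * x i k) + γ * β / 2 - β * ∑ k, x j k * x j k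
          ≤ -(γ * β / 2) := by nlinarith
      linarith
    have := hN _ harg
    linarith
  -- the strict dominance statement
  have hdom : ∀ i : Fin n, ∑ j ∈ Finset.univ.erase i,
      |σ (β * (∑ k, x j k * x i k) + γ * β / 2 - β * ∑ k, x j k * x j k) - σm|
      < |σ (β * (∑ k, x i k * x i k) + γ * β / 2 - β * ∑ k, x i k * x i k) - σm| := by
    intro i
    have h1 : ∑ j ∈ Finset.univ.erase i,
        |σ (β * (∑ k, x j k * x i k) + γ * β / 2 - β * ∑ k, x j k * x j k) - σm|
        ≤ (Finset.univ.erase i).card • ε := by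
      refine Finset.sum_le_card_nsmul _ _ _ ?_
      intro j hj
      rw [abs_of_nonneg (by linarith [hge (β * (∑ k, x j k * x i k) + γ * β / 2 - β * ∑ k, x j k * x j k)])]
      exact hoff i j (Finset.ne_of_mem_erase hj)
    have hcard : (Finset.univ.erase i).card ≤ n := by
      simpa using Finset.card_erase_le.trans (by simp)
    have h2 : (Finset.univ.erase i).card • ε ≤ (n : ℝ) * ε := by
      rw [nsmul_eq_mul]
      exact mul_le_mul_of_nonneg_right (by exact_mod_cast hcard) hεpos.le
    have h3 : (n : ℝ) * ε < (σp - σm) / 2 := by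
      rw [hε, mul_div_assoc', div_lt_div_iff₀ (by positivity) (by norm_num : (0:ℝ) < 2)]
      have hpos : (0:ℝ) < σp - σm := by linarith
      nlinarith [Nat.cast_nonneg (α := ℝ) n]
    have hd := hdiag i
    rw [abs_of_nonneg (by linarith)]
    linarith
  refine ⟨hdom, ?_⟩
  apply det_ne_zero_of_sum_row_lt_diag
  intro k
  simpa [Real.norm_eq_abs] using hdom k
end

section
/- Let σ : ℝ → ℝ be real analytic, monotonically increasing, with finite limit σ₋ at −∞ and limit σ₊ ∈ (σ₋, +∞] at +∞. Let x₁,…,x_n ∈ ℝ^{m'} satisfy ‖x_i‖₂² − ⟨x_i, x_j⟩ > γ > 0 for all i ≠ j, and let m ≥ n. Define M(w,b) ∈ ℝ^{n×(m+1)} by M(w,b)_{ij} = σ(w_jᵀx_i + b_j)/√m for j ≤ m and M(w,b)_{i,m+1} = 1, where w = (w₁,…,w_m) ∈ (ℝ^{m'})^m and b ∈ ℝ^m. Then the set {(w,b) : rank M(w,b) < n} has Lebesgue measure zero. -/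
/-!
If `rank M(w,b) < n`, then `det (M(w,b) * C) = 0` for every fixed `C`. Taking for `C` the
matrix that picks `n` hidden columns, rescales them by `√m` and subtracts `σ₋` times the all-ones
column, this minor is `φ(w,b) = det [σ(w_jᵀ x_i + b_j) - σ₋]_{i,j ≤ n}`. It is real analytic in
`(w,b)`, and the zero set of a real-analytic function that does not vanish identically is null
(isolated zeros in one variable, Fubini for products). Finally `φ ≢ 0`: for `w_j = β x_j`,
`b_j = βγ/2 - β‖x_j‖²` the pre-activations are `βγ/2` on the diagonal and at most `-βγ/2` off it,
so for large `β` the matrix `[σ(⋯) - σ₋]` is strictly diagonally dominant.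
-/

open Filter MeasureTheory Set Function Topology

def AnalyticZerosNull (α : Type*) [NormedAddCommGroup α] [NormedSpace ℝ α] [MeasureSpace α] :
    Prop :=
  ∀ f : α → ℝ, AnalyticOnNhd ℝ f univ → f ≠ 0 → ∀ᵐ a, f a ≠ 0

section AnalyticZerosNull

variable {α β : Type*} [NormedAddCommGroup α] [NormedSpace ℝ α] [MeasureSpace α]
  [NormedAddCommGroup β] [NormedSpace ℝ β] [MeasureSpace β]

theorem analyticZerosNull_real : AnalyticZerosNull ℝ := by
  intro f hf hf0
  have hcodiscrete : ∀ᶠ a in codiscreteWithin univ, f a ≠ 0 :=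
    (hf.eqOn_zero_or_eventually_ne_zero_of_preconnected isPreconnected_univ).resolve_left
      fun h => hf0 (funext fun a => h (mem_univ a))
  have := ae_restrict_le_codiscreteWithin (μ := volume) MeasurableSet.univ hcodiscrete
  rwa [Measure.restrict_univ] at this

theorem AnalyticZerosNull.of_measurePreserving (h : AnalyticZerosNull α) (e : α ≃ᵐ β)
    (he : MeasurePreserving e) (he_an : AnalyticOnNhd ℝ e univ) : AnalyticZerosNull β := by
  intro f hf hf0
  rw [← he.map_eq, e.measurableEmbedding.ae_map_iff]
  obtain ⟨b, hb⟩ := Function.ne_iff.1 hf0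
  exact h (f ∘ e) (hf.comp he_an (mapsTo_univ _ _))
    (Function.ne_iff.2 ⟨e.symm b, by simpa using hb⟩)

theorem AnalyticZerosNull.prod [SecondCountableTopology β]
    [OpensMeasurableSpace α] [OpensMeasurableSpace β] [SFinite (volume : Measure β)]
    (hα : AnalyticZerosNull α) (hβ : AnalyticZerosNull β) : AnalyticZerosNull (α × β) := by
  intro f hf hf0
  obtain ⟨⟨a₀, b₀⟩, h₀⟩ := Function.ne_iff.1 hf0
  have hmeas : MeasurableSet {p | f p ≠ 0} :=
    (isOpen_ne_fun hf.continuous continuous_const).measurableSet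
  have hslice_fst : ∀ b, AnalyticOnNhd ℝ (fun a => f (a, b)) univ := fun b =>
    hf.comp (analyticOnNhd_id.prod analyticOnNhd_const) (mapsTo_univ _ _)
  have hslice_snd : ∀ a, AnalyticOnNhd ℝ (fun b => f (a, b)) univ := fun a =>
    hf.comp (analyticOnNhd_const.prod analyticOnNhd_id) (mapsTo_univ _ _)
  rw [Measure.volume_eq_prod, Measure.ae_prod_iff_ae_ae hmeas]
  filter_upwards [hα _ (hslice_fst b₀) (Function.ne_iff.2 ⟨a₀, h₀⟩)] with a ha
  exact hβ _ (hslice_snd a) (Function.ne_iff.2 ⟨b₀, ha⟩)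

theorem AnalyticZerosNull.pi [SecondCountableTopology α] [OpensMeasurableSpace α]
    [SigmaFinite (volume : Measure α)] (h : AnalyticZerosNull α) :
    ∀ k, AnalyticZerosNull (Fin k → α)
  | 0 => fun f _ hf0 => ae_of_all _ fun a => by
      obtain ⟨b, hb⟩ := Function.ne_iff.1 hf0
      rwa [Subsingleton.elim a b]
  | k + 1 => by
      have hcons : ⇑(MeasurableEquiv.piFinSuccAbove (n := k) (fun _ => α) 0).symm
          = Fin.consEquivL ℝ (fun _ => α) := by
        funext p i
        simp
      refine (h.prod (AnalyticZerosNull.pi h k)).of_measurePreserving _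
        (volume_preserving_piFinSuccAbove (fun _ => α) 0).symm ?_
      rw [hcons]
      exact (Fin.consEquivL ℝ (fun _ => α)).toContinuousLinearMap.analyticOnNhd univ

end AnalyticZerosNull

theorem analyticZerosNull_weights (m m' : ℕ) :
    AnalyticZerosNull ((Fin m → Fin m' → ℝ) × (Fin m → ℝ)) :=
  ((analyticZerosNull_real.pi m').pi m).prod (analyticZerosNull_real.pi m)

@[fun_prop]
theorem analyticAt_apply {𝕜 ι E : Type*} [NontriviallyNormedField 𝕜] [Fintype ι]
    [NormedAddCommGroup E] [NormedSpace 𝕜 E] (i : ι) (f : ι → E) :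
    AnalyticAt 𝕜 (fun g : ι → E => g i) f :=
  (ContinuousLinearMap.proj (R := 𝕜) (φ := fun _ => E) i).analyticAt f

attribute [local fun_prop] analyticAt_fst analyticAt_snd

theorem AnalyticOnNhd.matrix_det {𝕜 E ι : Type*} [NontriviallyNormedField 𝕜]
    [NormedAddCommGroup E] [NormedSpace 𝕜 E] [Fintype ι] [DecidableEq ι] {s : Set E}
    {A : E → Matrix ι ι 𝕜} (hA : ∀ i j, AnalyticOnNhd 𝕜 (fun x => A x i j) s) :
    AnalyticOnNhd 𝕜 (fun x => (A x).det) s := by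
  simp only [Matrix.det_apply, Units.smul_def, zsmul_eq_mul]
  exact Finset.analyticOnNhd_fun_sum _ fun τ _ =>
    analyticOnNhd_const.mul (Finset.analyticOnNhd_fun_prod _ fun i _ => hA (τ i) i)

theorem Matrix.det_mul_eq_zero_of_rank_lt {R m n : Type*} [CommRing R] [IsDomain R]
    [Fintype m] [DecidableEq m] [Fintype n] (A : Matrix m n R) (C : Matrix n m R)
    (h : A.rank < Fintype.card m) : (A * C).det = 0 := by
  by_contra hdet
  exact h.not_ge ((Matrix.rank_of_det_ne_zero hdet).symm.le.trans (A.rank_mul_le_left C))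

section Activation

variable {σ : ℝ → ℝ} {σm : ℝ}

theorem eventually_mul_sub_lt_sub (hbot : Tendsto σ atBot (𝓝 σm))
    (htop : Tendsto σ atTop atTop ∨ ∃ σp, σm < σp ∧ Tendsto σ atTop (𝓝 σp)) (c : ℝ) :
    ∀ᶠ t in atTop, c * (σ (-t) - σm) < σ t - σm := by
  have hleft : Tendsto (fun t => c * (σ (-t) - σm)) atTop (𝓝 0) := by
    simpa using ((hbot.comp tendsto_neg_atTop_atBot).sub_const σm).const_mul c
  rcases htop with htop | ⟨σp, hσp, htop⟩
  · filter_upwards [hleft.eventually_lt_const zero_lt_one, htop.eventually_gt_atTop (σm + 1)]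
      with t ht₁ ht₂
    linarith
  · exact hleft.eventually_lt (htop.sub_const σm) (sub_pos.2 hσp)

theorem det_activation_ne_zero_of_diagDominant {ι : Type*} [Fintype ι] [DecidableEq ι]
    (hmono : Monotone σ) (hbot : Tendsto σ atBot (𝓝 σm)) {t : ℝ}
    (ht : Fintype.card ι * (σ (-t) - σm) < σ t - σm) (A : ι → ι → ℝ)
    (hdiag : ∀ j, A j j = t) (hoff : ∀ i j, i ≠ j → A i j ≤ -t) :
    (Matrix.of fun i j => σ (A i j) - σm).det ≠ 0 := by
  have hσm : ∀ s, 0 ≤ σ s - σm := fun s => sub_nonneg.2 (hmono.le_of_tendsto hbot s)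
  refine det_ne_zero_of_sum_col_lt_diag fun j => ?_
  simp only [Matrix.of_apply, Real.norm_eq_abs, abs_of_nonneg (hσm _), hdiag]
  calc ∑ i ∈ Finset.univ.erase j, (σ (A i j) - σm)
      ≤ ∑ _i ∈ Finset.univ.erase j, (σ (-t) - σm) :=
        Finset.sum_le_sum fun i hi => by
          gcongr
          exact hmono (hoff i j (Finset.ne_of_mem_erase hi))
    _ ≤ Fintype.card ι * (σ (-t) - σm) := by
        rw [Finset.sum_const, nsmul_eq_mul]
        gcongr
        · exact hσm _
        · exact_mod_cast (Finset.card_erase_le).trans (Finset.card_univ).le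
    _ < σ t - σm := ht

end Activation

section FeatureMatrix

variable {ι κ d : Type*} [Fintype d]

def preactivation (x : ι → d → ℝ) (p : (κ → d → ℝ) × (κ → ℝ)) (i : ι) (j : κ) : ℝ :=
  (∑ k, p.1 j k * x i k) + p.2 j

noncomputable def featureMatrix (σ : ℝ → ℝ) (s : ℝ) (x : ι → d → ℝ) (p : (κ → d → ℝ) × (κ → ℝ)) :
    Matrix ι (κ ⊕ Unit) ℝ :=
  Matrix.of fun i => Sum.elim (fun j => σ (preactivation x p i j) / s) (fun _ => 1)

theorem det_activation_eq_zero_of_rank_lt [Fintype ι] [DecidableEq ι] [Fintype κ] [DecidableEq κ]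
    {σ : ℝ → ℝ} {s : ℝ} (hs : s ≠ 0) (c : ℝ) (x : ι → d → ℝ) (J : ι → κ)
    {p : (κ → d → ℝ) × (κ → ℝ)} (h : (featureMatrix σ s x p).rank < Fintype.card ι) :
    (Matrix.of fun i i' => σ (preactivation x p i (J i')) - c).det = 0 := by
  -- `C` keeps the columns `J i'`, undoes the scaling by `s`, subtracts `c` times the ones column.
  let C : Matrix (κ ⊕ Unit) ι ℝ :=
    Matrix.of fun a i' => Sum.elim (fun j => if j = J i' then s else 0) (fun _ => -c) a
  have hC :
      featureMatrix σ s x p * C = Matrix.of fun i i' => σ (preactivation x p i (J i')) - c := by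
    ext i i'
    simp [featureMatrix, C, Matrix.mul_apply, Fintype.sum_sum_type, hs, sub_eq_add_neg]
  rw [← hC]
  exact Matrix.det_mul_eq_zero_of_rank_lt _ _ h

theorem preactivation_extend {x : ι → d → ℝ} {J : ι → κ} (hJ : Injective J) (β γ : ℝ)
    (i i' : ι) :
    preactivation x (extend J (fun i k => β * x i k) 0,
        extend J (fun i => β * γ / 2 - β * ∑ k, x i k * x i k) 0) i (J i') =
      β * γ / 2 - β * ((∑ k, x i' k * x i' k) - ∑ k, x i' k * x i k) := by
  simp only [preactivation, hJ.extend_apply, mul_assoc, ← Finset.mul_sum]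
  ring

theorem exists_det_activation_ne_zero [Fintype ι] [DecidableEq ι] {σ : ℝ → ℝ} {σm : ℝ}
    (hmono : Monotone σ) (hbot : Tendsto σ atBot (𝓝 σm))
    (htop : Tendsto σ atTop atTop ∨ ∃ σp, σm < σp ∧ Tendsto σ atTop (𝓝 σp))
    {x : ι → d → ℝ} {γ : ℝ} (hγ : 0 < γ)
    (hsep : ∀ i j, i ≠ j → γ < (∑ k, x i k * x i k) - ∑ k, x i k * x j k)
    {J : ι → κ} (hJ : Injective J) :
    ∃ p : (κ → d → ℝ) × (κ → ℝ),
      (Matrix.of fun i i' => σ (preactivation x p i (J i')) - σm).det ≠ 0 := by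
  have hscale : Tendsto (fun β : ℝ => β * γ / 2) atTop atTop :=
    (tendsto_id.atTop_mul_const hγ).atTop_div_const two_pos
  obtain ⟨β, hβ, hβ0⟩ := ((hscale.eventually (eventually_mul_sub_lt_sub hbot htop _)).and
    (eventually_ge_atTop 0)).exists
  set p : (κ → d → ℝ) × (κ → ℝ) := (extend J (fun i k => β * x i k) 0,
    extend J (fun i => β * γ / 2 - β * ∑ k, x i k * x i k) 0)
  refine ⟨p, det_activation_ne_zero_of_diagDominant hmono hbot hβ
    (fun i i' => preactivation x p i (J i')) (fun j => ?_) fun i j hij => ?_⟩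
  · simp only [p, preactivation_extend hJ]
    ring
  · have := mul_le_mul_of_nonneg_left (hsep j i hij.symm).le hβ0
    simp only [p, preactivation_extend hJ]
    linarith

theorem analyticOnNhd_det_activation [Fintype ι] [DecidableEq ι] [Fintype κ] {σ : ℝ → ℝ}
    (hσ : ∀ t, AnalyticAt ℝ σ t) (c : ℝ) (x : ι → d → ℝ) (J : ι → κ) :
    AnalyticOnNhd ℝ
      (fun p : (κ → d → ℝ) × (κ → ℝ) =>
        (Matrix.of fun i i' => σ (preactivation x p i (J i')) - c).det) univ :=
  AnalyticOnNhd.matrix_det fun i i' p _ => by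
    simp only [Matrix.of_apply, preactivation]
    fun_prop

end FeatureMatrix

/-- For a real-analytic, monotone activation with finite limit `σ₋` at `−∞` and limit
`σ₊ ∈ (σ₋, +∞]` at `+∞`, separated data points `x₁,…,x_n`, and width `m ≥ n`, the set of
weights `(w,b)` for which the random feature matrix `M(w,b)` (with appended all-ones
column) has rank less than `n` is Lebesgue-null. -/
theorem stmt7 {n m m' : ℕ} (hmn : n ≤ m) (σ : ℝ → ℝ)
    (hanalytic : ∀ t, AnalyticAt ℝ σ t) (hmono : Monotone σ) (σm : ℝ)
    (hbot : Tendsto σ atBot (nhds σm))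
    (htop : Tendsto σ atTop atTop ∨ ∃ σp, σm < σp ∧ Tendsto σ atTop (nhds σp))
    (x : Fin n → Fin m' → ℝ) (γ : ℝ) (hγ : 0 < γ)
    (hsep : ∀ i j, i ≠ j → γ < (∑ k, x i k * x i k) - ∑ k, x i k * x j k) :
    volume {p : (Fin m → Fin m' → ℝ) × (Fin m → ℝ) |
      (Matrix.of fun i => Sum.elim
          (fun j => σ ((∑ k, p.1 j k * x i k) + p.2 j) / Real.sqrt m)
          (fun _ : Unit => (1 : ℝ)) :
        Matrix (Fin n) (Fin m ⊕ Unit) ℝ).rank < n} = 0 := by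
  rcases n.eq_zero_or_pos with rfl | hn
  · simp
  have hs : Real.sqrt m ≠ 0 := (Real.sqrt_pos.2 (by exact_mod_cast hn.trans_le hmn)).ne'
  have hJ : Injective (Fin.castLE hmn) := Fin.castLE_injective hmn
  obtain ⟨p₀, hp₀⟩ := exists_det_activation_ne_zero hmono hbot htop hγ hsep hJ
  have hφ := analyticZerosNull_weights m m' _ (analyticOnNhd_det_activation hanalytic σm x _)
    (Function.ne_iff.2 ⟨p₀, hp₀⟩)
  refine measure_mono_null (fun p hp => ?_) (ae_iff.1 hφ)
  exact not_not.2 <| det_activation_eq_zero_of_rank_lt hs σm x _ <|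
    (hp : (featureMatrix σ (Real.sqrt m) x p).rank < n).trans_eq (Fintype.card_fin n).symm
end
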